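/- Let X be an infinite neat completely regular Hausdorff space. Then pd(X) = pd(F(X)) = pd(A(X)). -/

import Mathlib

open Cardinal Set Topology

universe u v

/-- A neighborhood assignment on a topological space. -/
def NbhdAssign {X : Type u} [TopologicalSpace X] (U : X → Set X) : Prop :=
  ∀ x, IsOpen (U x) ∧ x ∈ U x

/-- The pinning down number of a family of sets: the least cardinality of a set
meeting every nonempty member of the family. -/
noncomputable def pdFam {α : Type u} (𝒜 : Set (Set α)) : Cardinal.{u} :=
  sInf {c | ∃ A : Set α, #A = c ∧ ∀ S ∈ 𝒜, S.Nonempty → (A ∩ S).Nonempty}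

/-- The pinning down number of a neighborhood assignment. -/
noncomputable def pdAssign {X : Type u} [TopologicalSpace X] (U : X → Set X) : Cardinal.{u} :=
  sInf {c | ∃ A : Set X, #A = c ∧ ∀ x, (A ∩ U x).Nonempty}

/-- The pinning down number of a topological space. -/
noncomputable def pdSpace (X : Type u) [TopologicalSpace X] : Cardinal.{u} :=
  ⨆ U : {U : X → Set X // NbhdAssign U}, pdAssign U.1

/-- The density of a topological space. -/
noncomputable def density (X : Type u) [TopologicalSpace X] : Cardinal.{u} :=
  sInf {c | ∃ D : Set X, #D = c ∧ Dense D}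

/-- The cellularity of a topological space. -/
noncomputable def cellularity (X : Type u) [TopologicalSpace X] : Cardinal.{u} :=
  ⨆ 𝒞 : {C : Set (Set X) // (∀ U ∈ C, IsOpen U ∧ U.Nonempty) ∧ C.PairwiseDisjoint id}, #𝒞.1

/-- `Δ(X)`: the least cardinality of a nonempty open subset of `X`. -/
noncomputable def Delta (X : Type u) [TopologicalSpace X] : Cardinal.{u} :=
  sInf {c | ∃ G : Set X, IsOpen G ∧ G.Nonempty ∧ #G = c}

/-- A space is neat if `Δ(X) = |X|`. -/
def Neat (X : Type u) [TopologicalSpace X] : Prop := Delta X = #X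

/-- `G`, together with the map `ι : X → G`, is a free topological group on `X`:
`G` is a Hausdorff topological group, `ι` is a closed embedding, `ι(X)` generates `G`
algebraically, and every continuous map from `X` to a topological group `H` extends to a
continuous homomorphism `G → H`. -/
def IsFreeTopGroup (X : Type u) [TopologicalSpace X]
    (G : Type u) [Group G] [TopologicalSpace G] [IsTopologicalGroup G] [T2Space G]
    (ι : X → G) : Prop :=
  IsClosedEmbedding ι ∧ Subgroup.closure (Set.range ι) = ⊤ ∧
  ∀ (H : Type u) [Group H] [TopologicalSpace H] [IsTopologicalGroup H] [T2Space H]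
    (f : X → H), Continuous f → ∃ φ : G →* H, Continuous φ ∧ ∀ x, φ (ι x) = f x

/-- `A`, together with `ι : X → A`, is a free abelian topological group on `X`. -/
def IsFreeAbelianTopGroup (X : Type u) [TopologicalSpace X]
    (A : Type u) [CommGroup A] [TopologicalSpace A] [IsTopologicalGroup A] [T2Space A]
    (ι : X → A) : Prop :=
  IsClosedEmbedding ι ∧ Subgroup.closure (Set.range ι) = ⊤ ∧
  ∀ (H : Type u) [CommGroup H] [TopologicalSpace H] [IsTopologicalGroup H] [T2Space H]
    (f : X → H), Continuous f → ∃ φ : A →* H, Continuous φ ∧ ∀ x, φ (ι x) = f x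

set_option linter.unusedVariables false
set_option linter.unnecessarySimpa false
set_option linter.unusedSectionVars false

section PDAPI
variable {X : Type u} [TopologicalSpace X]

lemma pdAssign_le_mk {U : X → Set X} {A : Set X} (hA : ∀ x, (A ∩ U x).Nonempty) :
    pdAssign U ≤ #A :=
  csInf_le' ⟨A, rfl, hA⟩

lemma exists_pin (U : X → Set X) (hU : NbhdAssign U) :
    ∃ A : Set X, #A = pdAssign U ∧ ∀ x, (A ∩ U x).Nonempty := by
  have hne : {c | ∃ A : Set X, #A = c ∧ ∀ x, (A ∩ U x).Nonempty}.Nonempty :=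
    ⟨#(univ : Set X), univ, rfl, fun x => ⟨x, mem_univ x, (hU x).2⟩⟩
  exact csInf_mem hne

lemma bddAbove_pd :
    BddAbove (Set.range fun U : {U : X → Set X // NbhdAssign U} => pdAssign U.1) := by
  refine ⟨#X, ?_⟩
  rintro c ⟨U, rfl⟩
  calc pdAssign U.1 ≤ #(univ : Set X) :=
        pdAssign_le_mk (fun x => ⟨x, mem_univ x, (U.2 x).2⟩)
    _ = #X := mk_univ

lemma pdAssign_le_pdSpace {U : X → Set X} (hU : NbhdAssign U) :
    pdAssign U ≤ pdSpace X :=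
  le_ciSup bddAbove_pd (⟨U, hU⟩ : {U : X → Set X // NbhdAssign U})

instance : Nonempty {U : X → Set X // NbhdAssign U} :=
  ⟨⟨fun _ => univ, fun x => ⟨isOpen_univ, mem_univ x⟩⟩⟩

lemma pdSpace_le {c : Cardinal.{u}}
    (h : ∀ U : X → Set X, NbhdAssign U → pdAssign U ≤ c) : pdSpace X ≤ c :=
  ciSup_le fun U => h U.1 U.2

lemma pdSpace_le_mk : pdSpace X ≤ #X :=
  pdSpace_le fun U hU => by
    calc pdAssign U ≤ #(univ : Set X) :=
          pdAssign_le_mk (fun x => ⟨x, mem_univ x, (hU x).2⟩)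
      _ = #X := mk_univ

lemma mk_open_of_neat (hneat : Neat X) {O : Set X} (ho : IsOpen O) (hne : O.Nonempty) :
    (#O) = #X := by
  refine le_antisymm (mk_set_le O) ?_
  rw [← hneat]
  exact csInf_le' ⟨O, ho, hne, rfl⟩

end PDAPI

set_option linter.unusedSectionVars false
section CELL
variable {X : Type u} [TopologicalSpace X] [T2Space X] [Infinite X]

/-- n distinct points with pairwise disjoint open neighborhoods in a T2 space. -/
lemma exists_disjoint_opens (n : ℕ) :
    ∃ (x : Fin n → X) (O : Fin n → Set X), Function.Injective x ∧
      (∀ i, IsOpen (O i) ∧ x i ∈ O i) ∧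
      ∀ i j, i ≠ j → Disjoint (O i) (O j) := by
  obtain e : Fin n ↪ X := (Fin.valEmbedding.trans (Infinite.natEmbedding X))
  have hsep : ∀ i j : Fin n, i ≠ j → ∃ S T : Set X,
      IsOpen S ∧ IsOpen T ∧ e i ∈ S ∧ e j ∈ T ∧ Disjoint S T := by
    intro i j hij
    obtain ⟨S, T, hS, hT, hiS, hjT, hd⟩ := t2_separation (e.injective.ne hij)
    exact ⟨S, T, hS, hT, hiS, hjT, hd⟩
  classical
  choose! S T hS hT heS heT hd using hsep
  refine ⟨e, fun i => ⋂ j ∈ Finset.univ.erase i, (S i j ∩ T j i), e.injective, ?_, ?_⟩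
  · intro i
    constructor
    · exact isOpen_biInter_finset fun j hj =>
        ((hS i j (Finset.ne_of_mem_erase hj).symm).inter
          (hT j i (Finset.ne_of_mem_erase hj)))
    · refine mem_biInter fun j hj => ?_
      have hji : j ≠ i := Finset.ne_of_mem_erase hj
      exact ⟨heS i j hji.symm, heT j i hji⟩
  · intro i j hij
    have h1 : (⋂ k ∈ Finset.univ.erase i, (S i k ∩ T k i)) ⊆ S i j := by
      intro z hz
      have := mem_iInter₂.mp hz j (Finset.mem_erase.mpr ⟨hij.symm, Finset.mem_univ j⟩)
      exact this.1
    have h2 : (⋂ k ∈ Finset.univ.erase j, (S j k ∩ T k j)) ⊆ T i j := by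
      intro z hz
      have := mem_iInter₂.mp hz i (Finset.mem_erase.mpr ⟨hij, Finset.mem_univ i⟩)
      exact this.2
    exact Disjoint.mono h1 h2 (hd i j hij)

lemma aleph0_le_pdSpace : ℵ₀ ≤ pdSpace X := by
  rw [Cardinal.aleph0_le]
  intro n
  obtain ⟨x, O, hxinj, hO, hdisj⟩ := exists_disjoint_opens (X := X) n
  classical
  set U : X → Set X := fun z => if h : ∃ i, x i = z then O h.choose else univ with hU
  have hUassign : NbhdAssign U := by
    intro z
    by_cases h : ∃ i, x i = z
    · rw [hU]; simp only [dif_pos h]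
      refine ⟨(hO h.choose).1, ?_⟩
      set j := h.choose with hj
      have hspec : x j = z := h.choose_spec
      rw [← hspec]
      exact (hO j).2
    · rw [hU]; simp only [dif_neg h]
      exact ⟨isOpen_univ, mem_univ z⟩
  have key : ∀ A : Set X, (∀ z, (A ∩ U z).Nonempty) → (n : Cardinal.{u}) ≤ #A := by
    intro A hA
    have hmem : ∀ i : Fin n, ∃ a, a ∈ A ∩ O i := by
      intro i
      have h : ∃ k, x k = x i := ⟨i, rfl⟩
      have hx : U (x i) = O i := by
        rw [hU]; simp only [dif_pos h]
        exact congrArg O (hxinj h.choose_spec)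
      have := hA (x i)
      rw [hx] at this
      exact this
    choose a ha using hmem
    have hainj : Function.Injective a := by
      intro i j hij
      by_contra hne
      exact (hdisj i j hne).ne_of_mem (ha i).2 (ha j).2 (by rw [hij])
    have hemb : Function.Injective
        (fun i : ULift.{u} (Fin n) => (⟨a i.down, (ha i.down).1⟩ : A)) := by
      intro i j hij
      have hval : a i.down = a j.down := congrArg Subtype.val hij
      exact ULift.ext _ _ (hainj hval)
    calc (n : Cardinal.{u}) = #(ULift.{u} (Fin n)) := by simp
      _ ≤ #A := mk_le_of_injective hemb
  calc (n : Cardinal.{u}) ≤ pdAssign U := by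
        refine le_csInf ⟨#(univ : Set X), univ, rfl,
          fun z => ⟨z, mem_univ z, (hUassign z).2⟩⟩ ?_
        rintro c ⟨A, rfl, hA⟩
        exact key A hA
    _ ≤ pdSpace X := pdAssign_le_pdSpace hUassign
end CELL

section ANCHOR
variable {X : Type u} [Nonempty X]

open Classical in
noncomputable def pickF {σ : Type u} [LinearOrder σ] [WellFoundedLT σ] (G : σ → Set X) : σ → X :=
  (wellFounded_lt).fix fun s ih =>
    if h : (G s \ (Set.range fun y : {y : σ // y < s} => ih y.1 y.2)).Nonempty then h.some
    else Classical.arbitrary X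

lemma pickF_spec {σ : Type u} [LinearOrder σ] [WellFoundedLT σ] (G : σ → Set X)
    (hbig : ∀ s : σ, #(Iio s) < #(G s)) (s : σ) :
    pickF G s ∈ G s ∧ ∀ y, y < s → pickF G s ≠ pickF G y := by
  classical
  have hunfold : pickF G s =
      if h : (G s \ (Set.range fun y : {y : σ // y < s} => pickF G y.1)).Nonempty then h.some
      else Classical.arbitrary X := by
    rw [pickF, WellFounded.fix_eq]
  have hne : (G s \ (Set.range fun y : {y : σ // y < s} => pickF G y.1)).Nonempty := by
    by_contra hemp
    have hsub : G s ⊆ Set.range fun y : {y : σ // y < s} => pickF G y.1 := by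
      intro z hz
      by_contra hzr
      exact hemp ⟨z, hz, hzr⟩
    have h1 : #(G s) ≤ #(Set.range fun y : {y : σ // y < s} => pickF G y.1) :=
      mk_le_mk_of_subset hsub
    have h2 : #(Set.range fun y : {y : σ // y < s} => pickF G y.1) ≤ #{y : σ // y < s} :=
      mk_range_le
    have h3 : #{y : σ // y < s} = #(Iio s) := rfl
    have := (h1.trans h2).trans_lt (h3 ▸ hbig s)
    exact absurd this (lt_irrefl _)
  rw [dif_pos hne] at hunfold
  have hmem := hne.some_mem
  rw [← hunfold] at hmem
  refine ⟨hmem.1, ?_⟩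
  intro y hy heq
  exact hmem.2 ⟨⟨y, hy⟩, heq.symm⟩

end ANCHOR

section NEATPIN
variable {X : Type u} [TopologicalSpace X] [Infinite X]

/-- Key lemma: in a neat space, any family of at most |X| nonempty open sets
can be pinned by at most pd(X) points. -/
lemma neat_pin (hneat : Neat X) {I : Type u} (F : I → Set X) (hle : #I ≤ #X)
    (hop : ∀ i, IsOpen (F i)) (hne : ∀ i, (F i).Nonempty) :
    ∃ A : Set X, #A ≤ pdSpace X ∧ ∀ i, (A ∩ F i).Nonempty := by
  classical
  set σ := (#X).ord.ToType with hσ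
  have hmkσ : #σ = #X := mk_ord_toType (#X)
  obtain ⟨e⟩ : Nonempty (I ↪ σ) := by
    rw [← Cardinal.le_def, hmkσ]; exact hle
  set Gf : σ → Set X := fun s => if h : ∃ i, e i = s then F h.choose else univ with hGf
  have hGfull : ∀ s, #(Gf s) = #X := by
    intro s
    by_cases h : ∃ i, e i = s
    · rw [hGf]; simp only [dif_pos h]
      exact mk_open_of_neat hneat (hop _) (hne _)
    · rw [hGf]; simp only [dif_neg h, mk_univ]
  have hbig : ∀ s : σ, #(Iio s) < #(Gf s) := by
    intro s
    rw [hGfull s]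
    exact mk_Iio_ord_toType s
  set t : I → X := fun i => pickF Gf (e i) with ht
  have htmem : ∀ i, t i ∈ F i := by
    intro i
    have h : ∃ i', e i' = e i := ⟨i, rfl⟩
    have hG : Gf (e i) = F i := by
      rw [hGf]; simp only [dif_pos h]
      exact congrArg F (e.injective h.choose_spec)
    have := (pickF_spec Gf hbig (e i)).1
    rwa [hG] at this
  have htinj : Function.Injective t := by
    intro i j hij
    by_contra hij'
    have hne' : e i ≠ e j := fun h => hij' (e.injective h)
    rcases lt_or_gt_of_ne hne' with h | h
    · exact (pickF_spec Gf hbig (e j)).2 (e i) h hij.symm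
    · exact (pickF_spec Gf hbig (e i)).2 (e j) h hij
  set M : X → Set X := fun z => if h : ∃ i, t i = z then F h.choose else univ with hM
  have hMassign : NbhdAssign M := by
    intro z
    by_cases h : ∃ i, t i = z
    · rw [hM]; simp only [dif_pos h]
      refine ⟨hop _, ?_⟩
      set j := h.choose with hj
      have hspec : t j = z := h.choose_spec
      rw [← hspec]
      exact htmem j
    · rw [hM]; simp only [dif_neg h]
      exact ⟨isOpen_univ, mem_univ z⟩
  obtain ⟨A, hAcard, hApin⟩ := exists_pin M hMassign
  refine ⟨A, hAcard.le.trans (pdAssign_le_pdSpace hMassign), ?_⟩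
  intro i
  have h : ∃ i', t i' = t i := ⟨i, rfl⟩
  have hMt : M (t i) = F i := by
    rw [hM]; simp only [dif_pos h]
    exact congrArg F (htinj h.choose_spec)
  have := hApin (t i)
  rwa [hMt] at this

end NEATPIN

section CARDHELP
lemma mk_finArrow_le {β : Type u} {c : Cardinal.{u}} (hβ : #β ≤ c) (hc : ℵ₀ ≤ c) (n : ℕ) :
    #(Fin n → β) ≤ c := by
  induction n with
  | zero =>
    have : #(Fin 0 → β) = 1 := mk_eq_one _
    rw [this]
    exact le_trans one_le_aleph0 hc
  | succ n ih =>
    calc #(Fin (n + 1) → β) = #(β × (Fin n → β)) := mk_congr ((Fin.consEquiv fun _ => β).symm)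
      _ = #β * #(Fin n → β) := by rw [mk_prod, lift_id, lift_id]
      _ ≤ c * c := mul_le_mul' hβ ih
      _ = c := mul_eq_self hc
end CARDHELP

section WORDS
variable {X : Type u} [TopologicalSpace X] {G : Type u} [Group G] [TopologicalSpace G]
  [IsTopologicalGroup G]

def letterTerm (ι : X → G) (b : Bool) (x : X) : G := cond b (ι x) (ι x)⁻¹

def wordMap (ι : X → G) (p : List Bool) (v : Fin p.length → X) : G :=
  (List.ofFn fun i => letterTerm ι (p.get i) (v i)).prod

lemma continuous_wordMap {ι : X → G} (hι : Continuous ι) (p : List Bool) :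
    Continuous fun v : Fin p.length → X => wordMap ι p v := by
  unfold wordMap
  simp only [List.ofFn_eq_map]
  refine continuous_list_prod _ fun i _ => ?_
  unfold letterTerm
  cases hb : p.get i
  · exact (hι.comp (continuous_apply i : Continuous fun v : Fin p.length → X => v i)).inv
  · simpa [Function.comp_def] using hι.comp (continuous_apply i : Continuous fun v : Fin p.length → X => v i)

lemma wordMap_cons (ι : X → G) (b : Bool) (x : X) (p : List Bool) (v : Fin p.length → X) :
    wordMap ι (b :: p) (Fin.cons x v) = letterTerm ι b x * wordMap ι p v := by
  unfold wordMap
  rw [List.ofFn_succ, List.prod_cons]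
  simp [Fin.cons]

lemma exists_word {ι : X → G} (hcl : Subgroup.closure (Set.range ι) = ⊤) (g : G) :
    ∃ (p : List Bool) (v : Fin p.length → X), wordMap ι p v = g := by
  have hg : g ∈ Submonoid.closure (Set.range ι ∪ (Set.range ι)⁻¹) := by
    rw [← Subgroup.closure_toSubmonoid, hcl]
    simp
  obtain ⟨l, hl, hprod⟩ := Submonoid.exists_list_of_mem_closure hg
  suffices h : ∀ l' : List G, (∀ y ∈ l', y ∈ Set.range ι ∪ (Set.range ι)⁻¹) →
      ∃ (p : List Bool) (v : Fin p.length → X), wordMap ι p v = l'.prod by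
    obtain ⟨p, v, hv⟩ := h l hl
    exact ⟨p, v, hv.trans hprod⟩
  intro l'
  induction l' with
  | nil =>
    intro _
    exact ⟨[], Fin.elim0, by simp [wordMap]⟩
  | cons y l' ih =>
    intro hmem
    obtain ⟨p, v, hv⟩ := ih fun z hz => hmem z (List.mem_cons_of_mem _ hz)
    rcases hmem y List.mem_cons_self with hy | hy
    · obtain ⟨x, hx⟩ := hy
      refine ⟨true :: p, Fin.cons x v, ?_⟩
      rw [wordMap_cons, hv, List.prod_cons]
      simp [letterTerm, hx]
    · rw [Set.mem_inv] at hy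
      obtain ⟨x, hx⟩ := hy
      refine ⟨false :: p, Fin.cons x v, ?_⟩
      rw [wordMap_cons, hv, List.prod_cons]
      have : ι x = y⁻¹ := hx
      simp [letterTerm, this]
end WORDS

section FREELE
variable {X : Type u} [TopologicalSpace X] [T2Space X] [Infinite X]
  {G : Type u} [Group G] [TopologicalSpace G] [IsTopologicalGroup G]

lemma pdSpace_free_le (hneat : Neat X) {ι : X → G} (hι : Continuous ι)
    (hcl : Subgroup.closure (Set.range ι) = ⊤) : pdSpace G ≤ pdSpace X := by
  classical
  set κ := pdSpace X with hκdef
  have hκ : ℵ₀ ≤ κ := aleph0_le_pdSpace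
  refine pdSpace_le fun Ω hΩ => ?_
  -- box extraction
  have hbox : ∀ (p : List Bool) (t : Fin p.length → X), ∃ Vb : Fin p.length → Set X,
      (∀ i, IsOpen (Vb i)) ∧ (∀ i, t i ∈ Vb i) ∧
      ∀ v : Fin p.length → X, (∀ i, v i ∈ Vb i) → wordMap ι p v ∈ Ω (wordMap ι p t) := by
    intro p t
    have hopen : IsOpen ((wordMap ι p) ⁻¹' (Ω (wordMap ι p t))) :=
      (hΩ (wordMap ι p t)).1.preimage (continuous_wordMap hι p)
    have hmem : t ∈ (wordMap ι p) ⁻¹' (Ω (wordMap ι p t)) := (hΩ (wordMap ι p t)).2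
    obtain ⟨I, uu, h1, h2⟩ := isOpen_pi_iff.mp hopen t hmem
    refine ⟨fun i => if i ∈ I then uu i else univ, ?_, ?_, ?_⟩
    · intro i
      by_cases hi : i ∈ I
      · simpa [hi] using (h1 i hi).1
      · simp [hi]
    · intro i
      by_cases hi : i ∈ I
      · simpa [hi] using (h1 i hi).2
      · simp [hi]
    · intro v hv
      apply h2
      intro i hi
      have hi' : i ∈ I := hi
      simpa [hi'] using hv i
  choose Vb hVbopen hVbmem hVbbox using hbox
  -- representations
  have hrep : ∀ g : G, ∃ (p : List Bool) (v : Fin p.length → X), wordMap ι p v = g :=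
    exists_word hcl
  choose rp rv hrv using hrep
  -- the family of all box sides
  set J := Σ q : ULift.{u} (List Bool),
    (Fin q.down.length → X) × ULift.{u, 0} (Fin q.down.length) with hJdef
  set Ffam : J → Set X := fun j => Vb j.1.down j.2.1 j.2.2.down with hFfam
  have hJle : #J ≤ #X := by
    have hfiber : ∀ q : ULift.{u} (List Bool),
        #((Fin q.down.length → X) × ULift.{u, 0} (Fin q.down.length)) ≤ #X := by
      intro q
      calc #((Fin q.down.length → X) × ULift.{u, 0} (Fin q.down.length))
          = #(Fin q.down.length → X) * #(ULift.{u, 0} (Fin q.down.length)) := by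
            rw [mk_prod, lift_id, lift_id]
        _ ≤ #X * ℵ₀ :=
            mul_le_mul' (mk_finArrow_le le_rfl (aleph0_le_mk X) _) mk_le_aleph0
        _ = #X := by rw [mul_eq_max (aleph0_le_mk X) le_rfl, max_eq_left (aleph0_le_mk X)]
    calc #J = Cardinal.sum fun q : ULift.{u} (List Bool) =>
          #((Fin q.down.length → X) × ULift.{u, 0} (Fin q.down.length)) := mk_sigma _
      _ ≤ Cardinal.sum fun _ : ULift.{u} (List Bool) => #X := Cardinal.sum_le_sum _ _ hfiber
      _ = #(ULift.{u} (List Bool)) * #X := Cardinal.sum_const' _ _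
      _ ≤ ℵ₀ * #X := mul_le_mul' mk_le_aleph0 le_rfl
      _ = #X := by rw [mul_eq_max le_rfl (aleph0_le_mk X), max_eq_right (aleph0_le_mk X)]
  have hFop : ∀ j : J, IsOpen (Ffam j) := fun j => hVbopen _ _ _
  have hFne : ∀ j : J, (Ffam j).Nonempty := fun j => ⟨_, hVbmem _ _ _⟩
  obtain ⟨A, hAcard, hApin⟩ := neat_pin hneat Ffam hJle hFop hFne
  -- the pinning set in G
  set B := ⋃ q : ULift.{u} (List Bool),
    (wordMap ι q.down) '' {v : Fin q.down.length → X | ∀ i, v i ∈ A} with hBdef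
  have hBcard : #B ≤ κ := by
    have himg : ∀ q : ULift.{u} (List Bool),
        #((wordMap ι q.down) '' {v : Fin q.down.length → X | ∀ i, v i ∈ A}) ≤ κ := by
      intro q
      refine le_trans mk_image_le ?_
      have hinj : Function.Injective
          (fun w : {v : Fin q.down.length → X | ∀ i, v i ∈ A} =>
            (fun i => (⟨w.1 i, w.2 i⟩ : A)) : _ → (Fin q.down.length → A)) := by
        intro w w' hww
        apply Subtype.ext
        funext i
        exact congrArg Subtype.val (congrFun hww i)
      refine le_trans (mk_le_of_injective hinj) ?_
      exact mk_finArrow_le hAcard hκ _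
    calc #B ≤ Cardinal.sum fun q : ULift.{u} (List Bool) =>
          #((wordMap ι q.down) '' {v : Fin q.down.length → X | ∀ i, v i ∈ A}) :=
            mk_iUnion_le_sum_mk
      _ ≤ Cardinal.sum fun _ : ULift.{u} (List Bool) => κ := Cardinal.sum_le_sum _ _ himg
      _ = #(ULift.{u} (List Bool)) * κ := Cardinal.sum_const' _ _
      _ ≤ ℵ₀ * κ := mul_le_mul' mk_le_aleph0 le_rfl
      _ = κ := by rw [mul_eq_max le_rfl hκ, max_eq_right hκ]
  have hBpin : ∀ g : G, (B ∩ Ω g).Nonempty := by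
    intro g
    set p := rp g with hp
    set t := rv g with ht
    have hmeets : ∀ i : Fin p.length, (A ∩ Vb p t i).Nonempty := fun i =>
      hApin ⟨ULift.up p, t, ULift.up i⟩
    choose a ha using hmeets
    refine ⟨wordMap ι p a, ?_, ?_⟩
    · rw [hBdef]
      refine mem_iUnion.mpr ⟨ULift.up p, ?_⟩
      exact mem_image_of_mem _ (fun i => (ha i).1)
    · have := hVbbox p t a (fun i => (ha i).2)
      rwa [hrv g] at this
  exact le_trans (pdAssign_le_mk hBpin) hBcard
end FREELE

section FREEGE
variable {X : Type u} [TopologicalSpace X] [T35Space X] [T2Space X] [Infinite X]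
  {G : Type u} [Group G] [TopologicalSpace G] [IsTopologicalGroup G] [T2Space G]

lemma pdSpace_free_ge {ι : X → G} (hinj : Function.Injective ι) (hι : Continuous ι)
    (hcl : Subgroup.closure (Set.range ι) = ⊤)
    (hext : ∀ f : X → Multiplicative (ULift.{u} ℝ), Continuous f →
      ∃ φ : G →* Multiplicative (ULift.{u} ℝ), Continuous φ ∧ ∀ x, φ (ι x) = f x) :
    pdSpace X ≤ pdSpace G := by
  classical
  have hGinf : Infinite G := Infinite.of_injective ι hinj
  set ρ := pdSpace G with hρdef
  have hρ : ℵ₀ ≤ ρ := aleph0_le_pdSpace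
  refine pdSpace_le fun U hU => ?_
  -- separating real-valued functions
  have hfun : ∀ x : X, ∃ g : X → ℝ, Continuous g ∧ g x = 1 ∧ ∀ y, y ∉ U x → g y = 0 := by
    intro x
    obtain ⟨f, hfc, hfx, hfK⟩ := CompletelyRegularSpace.completely_regular x (U x)ᶜ
      (hU x).1.isClosed_compl (by simp [(hU x).2])
    refine ⟨fun y => 1 - (f y : ℝ), ?_, by simp [hfx], ?_⟩
    · exact continuous_const.sub (continuous_subtype_val.comp hfc)
    · intro y hy
      have h1 : f y = 1 := hfK hy
      simp [h1]
  choose gfun hgc hgx hg0 using hfun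
  -- extend to continuous homomorphisms
  have hf : ∀ x : X, ∃ φ : G →* Multiplicative (ULift.{u} ℝ), Continuous φ ∧
      ∀ y, φ (ι y) = Multiplicative.ofAdd (ULift.up (gfun x y)) := by
    intro x
    exact hext (fun y => Multiplicative.ofAdd (ULift.up (gfun x y)))
      (continuous_ofAdd.comp (continuous_uliftUp.comp (hgc x)))
  choose φ hφc hφval using hf
  -- the assignment on G
  set Ω : G → Set G := fun z =>
    if h : ∃ x, ι x = z then {w | φ h.choose w ≠ 1} else univ with hΩdef
  have hΩ : NbhdAssign Ω := by
    intro z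
    by_cases h : ∃ x, ι x = z
    · rw [hΩdef]; simp only [dif_pos h]
      constructor
      · have : {w | φ h.choose w ≠ 1} = (φ h.choose) ⁻¹' ({1}ᶜ) := rfl
        rw [this]
        exact isClosed_singleton.isOpen_compl.preimage (hφc h.choose)
      · set x₀ := h.choose with hx₀
        have hspec : ι x₀ = z := h.choose_spec
        show φ x₀ z ≠ 1
        rw [← hspec, hφval x₀ x₀, hgx x₀]
        intro heq
        have := congrArg (fun w => (Multiplicative.toAdd w).down) heq
        simpa using this
    · rw [hΩdef]; simp only [dif_neg h]
      exact ⟨isOpen_univ, mem_univ z⟩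
  obtain ⟨B, hBcard, hBpin⟩ := exists_pin Ω hΩ
  have hBle : #B ≤ ρ := hBcard.le.trans (pdAssign_le_pdSpace hΩ)
  -- letters of representations
  have hrep : ∀ g : G, ∃ (p : List Bool) (v : Fin p.length → X), wordMap ι p v = g :=
    exists_word hcl
  choose rp rv hrv using hrep
  set A : Set X := ⋃ b : ↥B, Set.range (rv b.1) with hAdef
  have hAcard : #A ≤ ρ := by
    calc #A ≤ Cardinal.sum fun b : ↥B => #(Set.range (rv b.1)) := mk_iUnion_le_sum_mk
      _ ≤ Cardinal.sum fun _ : ↥B => ℵ₀ := by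
          refine Cardinal.sum_le_sum _ _ fun b => ?_
          exact ((Set.finite_range (rv b.1)).lt_aleph0).le
      _ = #(↥B) * ℵ₀ := Cardinal.sum_const' _ _
      _ ≤ ρ * ρ := mul_le_mul' hBle hρ
      _ = ρ := mul_eq_self hρ
  -- a word all of whose letters are outside U x maps to 1 under φ x
  have hword1 : ∀ (x : X) (p : List Bool) (v : Fin p.length → X),
      (∀ i, gfun x (v i) = 0) → φ x (wordMap ι p v) = 1 := by
    intro x p v hv
    unfold wordMap
    rw [MonoidHom.map_list_prod]
    apply List.prod_eq_one
    intro w hw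
    rw [List.map_ofFn] at hw
    obtain ⟨i, rfl⟩ := Set.mem_range.mp ((List.mem_ofFn' _ w).mp hw)
    show φ x (letterTerm ι (p.get i) (v i)) = 1
    have h1 : φ x (ι (v i)) = 1 := by
      rw [hφval, hv i]
      rfl
    cases hb : p.get i
    · simp [letterTerm, map_inv, h1]
    · simp [letterTerm, h1]
  -- A pins U
  have hApin : ∀ x, (A ∩ U x).Nonempty := by
    intro x
    obtain ⟨b, hbB, hbΩ⟩ := hBpin (ι x)
    have h : ∃ x', ι x' = ι x := ⟨x, rfl⟩
    have hφb : φ x b ≠ 1 := by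
      rw [hΩdef] at hbΩ
      simp only [dif_pos h] at hbΩ
      have hch : h.choose = x := hinj h.choose_spec
      rwa [hch] at hbΩ
    by_contra hno
    rw [not_nonempty_iff_eq_empty] at hno
    have hout : ∀ i, gfun x (rv b i) = 0 := by
      intro i
      apply hg0
      intro hmem
      have hinA : rv b i ∈ A := by
        rw [hAdef]
        exact mem_iUnion.mpr ⟨⟨b, hbB⟩, mem_range_self i⟩
      exact absurd (mem_inter hinA hmem) (by rw [hno]; exact notMem_empty _)
    exact hφb (by rw [← hrv b]; exact hword1 x (rp b) (rv b) hout)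
  exact le_trans (pdAssign_le_mk hApin) hAcard
end FREEGE

/-- for an infinite neat completely regular Hausdorff space `X`,
`pd(X) = pd(F(X)) = pd(A(X))`. -/
theorem free_topological_group_pd (X : Type u) [TopologicalSpace X] [T35Space X]
    [T2Space X] [Infinite X] (hneat : Neat X) :
    (∀ (G : Type u) [Group G] [TopologicalSpace G] [IsTopologicalGroup G] [T2Space G]
      (ι : X → G), IsFreeTopGroup X G ι → pdSpace X = pdSpace G) ∧
    (∀ (A : Type u) [CommGroup A] [TopologicalSpace A] [IsTopologicalGroup A] [T2Space A]
      (ι : X → A), IsFreeAbelianTopGroup X A ι → pdSpace X = pdSpace A)  := by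
  constructor
  · intro G _ _ _ _ ι hfree
    obtain ⟨hemb, hcl, hext⟩ := hfree
    refine le_antisymm ?_ ?_
    · exact pdSpace_free_ge hemb.injective hemb.continuous hcl
        (hext (Multiplicative (ULift.{u} ℝ)))
    · exact pdSpace_free_le hneat hemb.continuous hcl
  · intro A _ _ _ _ ι hfree
    obtain ⟨hemb, hcl, hext⟩ := hfree
    refine le_antisymm ?_ ?_
    · exact pdSpace_free_ge hemb.injective hemb.continuous hcl
        (hext (Multiplicative (ULift.{u} ℝ)))
    · exact pdSpace_free_le hneat hemb.continuous hcl
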